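/- Suppose the unlimited solution u^{n+1}_i approximates the nonnegative exact solution u(x_i) with error at most E_i ≤ C(Δx^p + Δt^q), and the PP-limiter modifies fluxes at most K_0 times consecutively with each single modification of size |Δx/Δt · u^{n+1}_j| where u^{n+1}_j < 0 (hence of size at most (Δx/Δt)E_j). Then the limited solution u^{new}_i satisfies |u^{new}_i - u(x_i)| ≤ (1 + K_0) C (Δx^p + Δt^q), i.e., the limiter preserves the order of accuracy. -/

import Mathlib

theorem stmt_14 (Δt Δx C : ℝ) (p q : ℕ) (K0 : ℕ)
    (hΔt : 0 < Δt) (hΔx : 0 < Δx) (hC : 0 ≤ C)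
    (u un1 unew : ℕ → ℝ)
    (hexact : ∀ j, 0 ≤ u j)
    (herr : ∀ j, |un1 j - u j| ≤ C * (Δx ^ p + Δt ^ q))
    (i : ℕ) (S : Finset ℕ) (hcard : S.card ≤ K0)
    (hneg : ∀ j ∈ S, un1 j < 0)
    (hmod : unew i = un1 i + (Δt / Δx) * ((Δx / Δt) * ∑ j ∈ S, un1 j)) :
    |unew i - u i| ≤ (1 + K0) * C * (Δx ^ p + Δt ^ q) := by
  set E := C * (Δx ^ p + Δt ^ q) with hE
  have hcoef : (Δt / Δx) * (Δx / Δt) = 1 := by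
    field_simp
  have h1 : unew i = un1 i + ∑ j ∈ S, un1 j := by
    rw [hmod, ← mul_assoc, hcoef, one_mul]
  have hterm : ∀ j ∈ S, |un1 j| ≤ E := by
    intro j hj
    have h := herr j
    have hn := hneg j hj
    have hu := hexact j
    rw [abs_of_neg hn]
    rw [abs_of_nonpos (by linarith)] at h
    linarith
  have hsum : |∑ j ∈ S, un1 j| ≤ (K0 : ℝ) * E := by
    calc |∑ j ∈ S, un1 j| ≤ ∑ j ∈ S, |un1 j| := Finset.abs_sum_le_sum_abs _ _
      _ ≤ ∑ _j ∈ S, E := Finset.sum_le_sum hterm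
      _ = (S.card : ℝ) * E := by rw [Finset.sum_const, nsmul_eq_mul]
      _ ≤ (K0 : ℝ) * E := by
          have hE0 : 0 ≤ E := by positivity
          exact mul_le_mul_of_nonneg_right (by exact_mod_cast hcard) hE0
  have := herr i
  calc |unew i - u i| = |(un1 i - u i) + ∑ j ∈ S, un1 j| := by rw [h1]; ring_nf
    _ ≤ |un1 i - u i| + |∑ j ∈ S, un1 j| := abs_add_le _ _
    _ ≤ E + (K0 : ℝ) * E := add_le_add this hsum
    _ = (1 + K0) * C * (Δx ^ p + Δt ^ q) := by rw [hE]; ring
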